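/- arXiv:2305.01809 — 8 statements merged into one kernel-verified Lean document; each statement's English description precedes it below -/
import Mathlib

section
/- Let A ⊆ B be an extension of commutative rings such that A is a local ring and A is integrally closed in B. Let f ∈ A[x] be a polynomial at least one of whose coefficients is a unit of A. If b ∈ B satisfies f(b) = 0, then either b ∈ A, or b is invertible in B and b⁻¹ ∈ A. -/
open Polynomial

/-- **Generalized Kaplansky Theorem 67.**
Let `A ⊆ B` be an extension of commutative rings (an injective ring homomorphism,
realized via an algebra structure) such that `A` is local and integrally closed in `B`.
If `f ∈ A[x]` has at least one unit coefficient and `b ∈ B` satisfies `f(b) = 0`,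
then either `b ∈ A`, or `b` is invertible in `B` with `b⁻¹ ∈ A`. -/
theorem stmt0 {A B : Type*} [CommRing A] [CommRing B] [IsLocalRing A] [Algebra A B]
    (hinj : Function.Injective (algebraMap A B))
    (hic : ∀ z : B, IsIntegral A z → ∃ a : A, algebraMap A B a = z)
    (f : Polynomial A) (hf : ∃ i, IsUnit (f.coeff i))
    (b : B) (hb : Polynomial.aeval b f = 0) :
    (∃ a : A, algebraMap A B a = b) ∨ (∃ a : A, b * algebraMap A B a = 1) := by
  by_cases htriv : (1 : A) = 0
  · left
    refine ⟨0, ?_⟩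
    have h1 : (1 : B) = 0 := by rw [← map_one (algebraMap A B), htriv, map_zero]
    have hall : ∀ x : B, x = 0 := fun x => by rw [← mul_one x, h1, mul_zero]
    rw [map_zero, hall b]
  have hA : Nontrivial A := ⟨1, 0, htriv⟩
  obtain ⟨j, hj⟩ := hf
  suffices H : ∀ N (f : Polynomial A) (j : ℕ), f.natDegree ≤ N → IsUnit (f.coeff j) →
      Polynomial.aeval b f = 0 →
      (∃ a : A, algebraMap A B a = b) ∨ (∃ a : A, b * algebraMap A B a = 1) from
    H f.natDegree f j le_rfl hj hb
  intro N
  induction N using Nat.strong_induction_on with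
  | _ N IH =>
  intro f j hdeg hj hb
  have hfne : f ≠ 0 := by
    rintro rfl
    simp only [coeff_zero, isUnit_zero_iff] at hj
    exact htriv hj.symm
  have hjle : j ≤ f.natDegree := le_natDegree_of_ne_zero hj.ne_zero
  rcases eq_or_lt_of_le hjle with hje | hjlt
  · -- unit leading coefficient: b is integral over A
    left
    have hlead : IsUnit f.leadingCoeff := by rwa [leadingCoeff, ← hje]
    refine hic b ⟨hlead.unit⁻¹ • f, monic_of_isUnit_leadingCoeff_inv_smul hlead, ?_⟩
    rw [← aeval_def, Units.smul_def, Algebra.smul_def, map_mul, hb, mul_zero]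
  · -- j < natDegree f
    set n := f.natDegree with hn
    have hn1 : 1 ≤ n := lt_of_le_of_lt (Nat.zero_le j) hjlt
    have hint : IsIntegral A (f.leadingCoeff • b) := isIntegral_leadingCoeff_smul f b hb
    obtain ⟨a', ha'⟩ := hic _ hint
    rw [Algebra.smul_def] at ha'
    set g : Polynomial A := f.eraseLead + C a' * X ^ (n - 1) with hg
    have hgdeg : g.natDegree ≤ n - 1 := by
      refine (natDegree_add_le _ _).trans (max_le (eraseLead_natDegree_le f) ?_)
      exact (natDegree_C_mul_le _ _).trans (natDegree_X_pow_le _)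
    have hgb : Polynomial.aeval b g = 0 := by
      have key : Polynomial.aeval b (f.eraseLead + C f.leadingCoeff * X ^ n) = 0 := by
        rw [eraseLead_add_C_mul_X_pow]; exact hb
      rw [hg, map_add, map_mul, aeval_C, ha']
      rw [map_add, map_mul, aeval_C] at key
      have hbn : (b : B) ^ n = b * b ^ (n - 1) := by
        rw [← pow_succ', Nat.sub_add_cancel hn1]
      rw [map_pow, aeval_X, hbn] at key
      rw [map_pow, aeval_X]
      linear_combination key
    have hNpos : 1 ≤ N := le_trans hn1 hdeg
    have hlt : N - 1 < N := Nat.sub_lt hNpos one_pos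
    have hgdeg' : g.natDegree ≤ N - 1 := hgdeg.trans (Nat.sub_le_sub_right hdeg 1)
    have hgcoeff : ∀ i, i ≠ n → i ≠ n - 1 → g.coeff i = f.coeff i := by
      intro i hi1 hi2
      rw [hg, coeff_add, eraseLead_coeff, if_neg hi1, coeff_C_mul, coeff_X_pow,
        if_neg (fun h => hi2 h), mul_zero, add_zero]
    rcases eq_or_lt_of_le (Nat.le_sub_one_of_lt hjlt) with hje1 | hjlt1
    · -- j = n - 1
      by_cases hs : IsUnit (g.coeff (n - 1))
      · exact IH (N - 1) hlt g (n - 1) hgdeg' hs hgb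
      · -- a' is a unit, so b is invertible
        have hgc : g.coeff (n - 1) = f.coeff (n - 1) + a' := by
          have hne : n - 1 ≠ n := by omega
          rw [hg, coeff_add, eraseLead_coeff, if_neg hne, coeff_C_mul, coeff_X_pow,
            if_pos rfl, mul_one]
        have ha'u : IsUnit a' := by
          by_contra ha'u
          apply hs
          by_contra hs'
          have : f.coeff (n - 1) ∈ nonunits A := by
            have := IsLocalRing.nonunits_add (a := g.coeff (n - 1)) (b := -a') hs'
              (by simpa [mem_nonunits_iff, IsUnit.neg_iff] using ha'u)
            rwa [hgc, add_assoc, add_neg_cancel, add_zero] at this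
          rw [← hje1] at this
          exact this hj
        right
        obtain ⟨u, hu⟩ := ha'u
        refine ⟨f.leadingCoeff * ↑u⁻¹, ?_⟩
        rw [map_mul, ← mul_assoc, mul_comm b, ← ha', ← map_mul, ← hu, ← Units.val_mul,
          mul_inv_cancel, Units.val_one, map_one]
    · -- j < n - 1
      refine IH (N - 1) hlt g j hgdeg' ?_ hgb
      rw [hgcoeff j (by omega) (by omega)]
      exact hj
end

section
/- Let A be a local integral domain with fraction field K, and let p be a prime ideal of A such that A is straight at p. If b ∈ K lies in pA_p (i.e. b = x/y for some x ∈ p and y ∈ A \ p), then b ∈ p·A[b], the extension of p to the subring A[b] of K generated by A and b. -/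
/-- The subset `p·A_m = {x/y : x ∈ p, y ∈ A \ m}` of the ambient field `F`. -/
def locSet {F : Type*} [Field F] (A : Subring F) (p m : Ideal A) : Set F :=
  {z | ∃ x : ↥A, x ∈ p ∧ ∃ y : ↥A, y ∉ m ∧ z = (x : F) / (y : F)}

/-- `A` is straight at the prime ideal `p`: for every overring `B` of `A`
(subring of the fraction field `F` of `A` containing `A`), the `A/p`-module `B/pB`
is torsion-free, stated elementwise: for `a ∈ A \ p` and `b ∈ B`,
if `a·b ∈ pB` then `b ∈ pB`. -/
def IsStraightAt {F : Type*} [Field F] (A : Subring F) (p : Ideal A) : Prop :=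
  ∀ (B : Subring F) (hAB : A ≤ B), ∀ a : ↥A, a ∉ p → ∀ b : ↥B,
    Subring.inclusion hAB a * b ∈ p.map (Subring.inclusion hAB) →
    b ∈ p.map (Subring.inclusion hAB)

/-- `p` is a locally divided prime ideal of `A`: `p·A_m = p·A_p` (as subsets of the
fraction field) for every maximal ideal `m` containing `p`. -/
def IsLocallyDividedAt {F : Type*} [Field F] (A : Subring F) (p : Ideal A) : Prop :=
  ∀ m : Ideal A, m.IsMaximal → p ≤ m → locSet A p m = locSet A p p

/-- The localization `A_m` of `A` at the prime ideal `m`, realized as the subring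
`{x/y : x ∈ A, y ∈ A \ m}` of the fraction field of `A`. -/
def locSubring {F : Type*} [Field F] (A : Subring F) (m : Ideal A) (hm : m.IsPrime) :
    Subring F where
  carrier := {z | ∃ x y : ↥A, y ∉ m ∧ z = (x : F) / (y : F)}
  zero_mem' := ⟨0, 1, fun h => hm.ne_top (m.eq_top_of_isUnit_mem h isUnit_one), by simp⟩
  one_mem' := ⟨1, 1, fun h => hm.ne_top (m.eq_top_of_isUnit_mem h isUnit_one), by simp⟩
  add_mem' := by
    rintro a b ⟨x1, y1, hy1, rfl⟩ ⟨x2, y2, hy2, rfl⟩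
    refine ⟨x1 * y2 + x2 * y1, y1 * y2, fun h => (hm.mem_or_mem h).elim hy1 hy2, ?_⟩
    have h1 : (y1 : F) ≠ 0 := fun h =>
      hy1 (by rw [show y1 = 0 from Subtype.ext h]; exact m.zero_mem)
    have h2 : (y2 : F) ≠ 0 := fun h =>
      hy2 (by rw [show y2 = 0 from Subtype.ext h]; exact m.zero_mem)
    push_cast
    field_simp
  mul_mem' := by
    rintro a b ⟨x1, y1, hy1, rfl⟩ ⟨x2, y2, hy2, rfl⟩
    refine ⟨x1 * x2, y1 * y2, fun h => (hm.mem_or_mem h).elim hy1 hy2, ?_⟩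
    push_cast
    rw [div_mul_div_comm]
  neg_mem' := by
    rintro a ⟨x, y, hy, rfl⟩
    exact ⟨-x, y, hy, by push_cast; rw [neg_div]⟩

/-- Let `A` be a local domain with fraction field `K` and `p` a prime ideal at which
`A` is straight.  If `b ∈ p·A_p` then `b ∈ p·A[b]`, where `A[b] = Subring.closure (A ∪ {b})`
is the subring of `K` generated by `A` and `b`, and `p·A[b]` is the extension of `p`
along the inclusion `A → A[b]`. -/
theorem stmt1 {K : Type*} [Field K] (A : Subring K) [IsLocalRing ↥A] [IsFractionRing ↥A K]
    (p : Ideal A) [p.IsPrime] (hst : IsStraightAt A p)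
    (b : K) (hb : b ∈ locSet A p p) :
    ∀ (B : Subring K), B = Subring.closure (↑A ∪ {b}) →
      ∀ (hle : A ≤ B) (hbB : b ∈ B),
        (⟨b, hbB⟩ : B) ∈ p.map (Subring.inclusion hle) := by
  obtain ⟨x, hx, y, hy, rfl⟩ := hb
  intro B _ hle hbB
  have hy0 : (y : K) ≠ 0 := by
    intro h
    exact hy (by rw [show y = 0 from Subtype.ext h]; exact p.zero_mem)
  apply hst B hle y hy
  have : Subring.inclusion hle y * ⟨_, hbB⟩ = Subring.inclusion hle x := by
    apply Subtype.ext
    show (y : K) * ((x : K) / (y : K)) = (x : K)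
    field_simp
  rw [this]
  exact Ideal.mem_map_of_mem _ hx
end

section
/- Let A be a local integral domain with fraction field K, and let p be a prime ideal of A such that A is straight at p. Then A is integrally closed in the CPI-extension A + pA_p, i.e. every element of the subring A + pA_p of K that is integral over A lies in A. -/
/-! Write `z = a + x/y` with `x ∈ p`, `y ∉ p`, and let `B = A[x/y]`. Since `y · (x/y) = x ∈ pB`,
straightness gives `x/y ∈ pB`, hence `B = A + pB`. As `x/y` is integral, `B` is a finitely
generated `A`-module, and `p` lies in the maximal ideal, so Nakayama's lemma forces `B = A`. -/

open Subalgebra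

section
variable {R A : Type*} [CommRing R] [CommRing A] [Algebra R A]

theorem Subalgebra.mul_mem_smul_toSubmodule {S : Subalgebra R A} (I : Ideal R) {s u : A}
    (hs : s ∈ S) (hu : u ∈ I • toSubmodule S) : s * u ∈ I • toSubmodule S := by
  refine Submodule.smul_induction_on hu (fun r hr n hn => ?_) (fun u v hu hv => ?_)
  · rw [mul_smul_comm]
    exact Submodule.smul_mem_smul hr (S.mul_mem hs hn)
  · rw [mul_add]
    exact add_mem hu hv

theorem Subalgebra.coe_mem_smul_toSubmodule_of_mem_map {S : Subalgebra R A} {I : Ideal R}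
    {b : S} (hb : b ∈ I.map (algebraMap R S)) : (b : A) ∈ I • toSubmodule S := by
  have hrange : LinearMap.range S.val.toLinearMap = toSubmodule S := by ext; simp
  have hb' : b ∈ I • (⊤ : Submodule R S) := by rwa [Ideal.smul_top_eq_map]
  have := Submodule.mem_map_of_mem (f := S.val.toLinearMap) hb'
  rwa [Submodule.map_smul'', Submodule.map_top, hrange] at this

theorem Subalgebra.one_sup_smul_toSubmodule_mul_le (S : Subalgebra R A) (I : Ideal R) :
    (1 ⊔ I • toSubmodule S) * (1 ⊔ I • toSubmodule S) ≤ 1 ⊔ I • toSubmodule S := by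
  have hsq : I • toSubmodule S * I • toSubmodule S ≤ I • toSubmodule S :=
    Submodule.mul_le.2 fun u hu v hv =>
      S.mul_mem_smul_toSubmodule I (Submodule.smul_le_right hu) hv
  simp only [Submodule.sup_mul, Submodule.mul_sup, one_mul, mul_one]
  exact sup_le (sup_le le_sup_left le_sup_right) (sup_le le_sup_right (hsq.trans le_sup_right))

theorem Algebra.toSubmodule_adjoin_le_one_sup_smul (I : Ideal R) {t : A}
    (ht : t ∈ I • toSubmodule (Algebra.adjoin R {t})) :
    toSubmodule (Algebra.adjoin R {t}) ≤ 1 ⊔ I • toSubmodule (Algebra.adjoin R {t}) := by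
  let T : Subalgebra R A := (1 ⊔ I • toSubmodule (Algebra.adjoin R {t})).toSubalgebra
    (Submodule.mem_sup_left (Submodule.one_le.1 le_rfl)) fun _ _ hx hy =>
      (Algebra.adjoin R {t}).one_sup_smul_toSubmodule_mul_le I (Submodule.mul_mem_mul hx hy)
  show Algebra.adjoin R {t} ≤ T
  exact Algebra.adjoin_le (Set.singleton_subset_iff.2 (Submodule.mem_sup_right ht))

theorem IsIntegral.mem_bot_of_mem_smul_adjoin {I : Ideal R} (hI : I ≤ Ideal.jacobson ⊥) {t : A}
    (hint : IsIntegral R t) (ht : t ∈ I • toSubmodule (Algebra.adjoin R {t})) :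
    t ∈ (⊥ : Subalgebra R A) := by
  have hle : toSubmodule (Algebra.adjoin R {t}) ≤ 1 :=
    Submodule.le_of_le_smul_of_le_jacobson_bot hint.fg_adjoin_singleton hI
      (Algebra.toSubmodule_adjoin_le_one_sup_smul I ht)
  rw [← Algebra.toSubmodule_bot] at hle
  exact hle (Algebra.self_mem_adjoin_singleton R t)

end

theorem IsStraightAt.mem_smul_toSubmodule {F : Type*} [Field F] {A : Subring F} {p : Ideal A}
    (hst : IsStraightAt A p) (S : Subalgebra A F) {t : F} (ht : t ∈ S) {x y : A} (hx : x ∈ p)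
    (hy : y ∉ p) (hxy : (y : F) * t = x) : t ∈ p • toSubmodule S := by
  have hAS : A ≤ S.toSubring := fun a ha => S.algebraMap_mem ⟨a, ha⟩
  refine S.coe_mem_smul_toSubmodule_of_mem_map (b := ⟨t, ht⟩)
    (hst S.toSubring hAS y hy ⟨t, ht⟩ ?_)
  have hmul : Subring.inclusion hAS y * ⟨t, ht⟩ = Subring.inclusion hAS x := Subtype.ext hxy
  rw [hmul]
  exact Ideal.mem_map_of_mem _ hx

theorem stmt2_general {K : Type*} [Field K] (A : Subring K) [IsLocalRing ↥A]
    (p : Ideal A) (hst : IsStraightAt A p)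
    (z : K) (hz : ∃ a : ↥A, ∃ t ∈ locSet A p p, z = (a : K) + t)
    (hint : IsIntegral ↥A z) :
    z ∈ A := by
  obtain ⟨a, _, ⟨x, hx, y, hy, rfl⟩, rfl⟩ := hz
  have hy0 : (y : K) ≠ 0 := fun h => hy (by simp [show y = 0 from Subtype.ext h])
  have hp : p ≤ Ideal.jacobson ⊥ := by
    rw [IsLocalRing.jacobson_eq_maximalIdeal ⊥ bot_ne_top]
    exact IsLocalRing.le_maximalIdeal fun h => hy (h ▸ Submodule.mem_top)
  have hxy_int : IsIntegral A ((x : K) / y) := by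
    simpa using hint.sub (show IsIntegral A (a : K) from isIntegral_algebraMap)
  have hxy_mem : (x : K) / y ∈ p • toSubmodule (Algebra.adjoin A {(x : K) / y}) :=
    hst.mem_smul_toSubmodule _ (Algebra.self_mem_adjoin_singleton A _) hx hy
      (mul_div_cancel₀ _ hy0)
  obtain ⟨b, hb⟩ := Algebra.mem_bot.1 (hxy_int.mem_bot_of_mem_smul_adjoin hp hxy_mem)
  rw [← hb]
  exact A.add_mem a.2 b.2

/-- Let `A` be a local domain with fraction field `K`, straight at the prime ideal `p`.
Then `A` is integrally closed in the CPI-extension `A + p·A_p`: every element of `K` of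
the form `a + t` with `a ∈ A`, `t ∈ p·A_p` that is integral over `A` lies in `A`. -/
theorem stmt2 {K : Type*} [Field K] (A : Subring K) [IsLocalRing ↥A] [IsFractionRing ↥A K]
    (p : Ideal A) [p.IsPrime] (hst : IsStraightAt A p)
    (z : K) (hz : ∃ a : ↥A, ∃ t ∈ locSet A p p, z = (a : K) + t)
    (hint : IsIntegral ↥A z) :
    z ∈ A :=
  stmt2_general A p hst z hz hint
end

section
/- Let A be a local integral domain with fraction field K and let p be a prime ideal of A. If A is straight at p, then p is a divided prime ideal of A, i.e. pA_p ⊆ A (equivalently A = A + pA_p, so every x/y ∈ K with x ∈ p and y ∈ A \ p lies in p). -/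
section StraightAux

variable {K : Type*} [Field K]

/-- The `A`-submodule of `K` spanned by all powers of `t`. -/
def powSpan (A : Subring K) (t : K) : Submodule ↥A K :=
  Submodule.span ↥A (Set.range fun i : ℕ => t ^ i)

lemma pow_mem_powSpan (A : Subring K) (t : K) (i : ℕ) : t ^ i ∈ powSpan A t :=
  Submodule.subset_span ⟨i, rfl⟩

lemma one_mem_powSpan (A : Subring K) (t : K) : (1 : K) ∈ powSpan A t := by
  simpa using pow_mem_powSpan A t 0

lemma powSpan_mul_mem (A : Subring K) {t u v : K} (hu : u ∈ powSpan A t)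
    (hv : v ∈ powSpan A t) : u * v ∈ powSpan A t := by
  induction hu using Submodule.span_induction with
  | mem u hu =>
    obtain ⟨i, rfl⟩ := hu
    induction hv using Submodule.span_induction with
    | mem v hv =>
      obtain ⟨j, rfl⟩ := hv
      exact Submodule.subset_span ⟨i + j, by simp [pow_add]⟩
    | zero => rw [mul_zero]; exact (powSpan A t).zero_mem
    | add v w _ _ hv hw => rw [mul_add]; exact (powSpan A t).add_mem hv hw
    | smul a v _ hv => rw [mul_smul_comm]; exact (powSpan A t).smul_mem a hv
  | zero => rw [zero_mul]; exact (powSpan A t).zero_mem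
  | add u w _ _ hu hw => rw [add_mul]; exact (powSpan A t).add_mem hu hw
  | smul a u _ hu => rw [smul_mul_assoc]; exact (powSpan A t).smul_mem a hu

/-- The subring `A[t]` of `K`, realized with carrier the span of the powers of `t`. -/
def powSubring (A : Subring K) (t : K) : Subring K where
  carrier := powSpan A t
  one_mem' := one_mem_powSpan A t
  zero_mem' := (powSpan A t).zero_mem
  add_mem' := fun h h' => (powSpan A t).add_mem h h'
  neg_mem' := fun h => (powSpan A t).neg_mem h
  mul_mem' := fun h h' => powSpan_mul_mem A h h'

lemma mem_powSubring_iff (A : Subring K) (t : K) (u : K) :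
    u ∈ powSubring A t ↔ u ∈ powSpan A t := Iff.rfl

lemma le_powSubring (A : Subring K) (t : K) : A ≤ powSubring A t := by
  intro a ha
  have h := (powSpan A t).smul_mem (⟨a, ha⟩ : ↥A) (one_mem_powSpan A t)
  have : (⟨a, ha⟩ : ↥A) • (1 : K) = a := by
    show a * 1 = a
    rw [mul_one]
  rwa [this] at h

lemma mul_mem_smul_powSpan {A : Subring K} (p : Ideal ↥A) {t u v : K}
    (hu : u ∈ powSpan A t) (hv : v ∈ p • powSpan A t) : u * v ∈ p • powSpan A t := by
  refine Submodule.smul_induction_on hv (fun r hr n hn => ?_) (fun a b ha hb => ?_)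
  · rw [mul_smul_comm]
    exact Submodule.smul_mem_smul hr (powSpan_mul_mem A hu hn)
  · rw [mul_add]; exact Submodule.add_mem _ ha hb

lemma map_le_smul_powSpan {A : Subring K} (p : Ideal ↥A) (t : K)
    (hAB : A ≤ powSubring A t) (b : ↥(powSubring A t))
    (hb : b ∈ p.map (Subring.inclusion hAB)) : (b : K) ∈ p • powSpan A t := by
  have hb' : b ∈ Ideal.span ((Subring.inclusion hAB) '' (p : Set ↥A)) := hb
  clear hb
  induction hb' using Submodule.span_induction with
  | mem x hx =>
    obtain ⟨c, hc, rfl⟩ := hx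
    have h := Submodule.smul_mem_smul hc (one_mem_powSpan A t)
    have he : c • (1 : K) = ((Subring.inclusion hAB c : ↥(powSubring A t)) : K) := by
      show (c : K) * 1 = _
      rw [mul_one]; rfl
    rwa [he] at h
  | zero => exact Submodule.zero_mem _
  | add x y _ _ hx hy =>
    have : ((x + y : ↥(powSubring A t)) : K) = (x : K) + (y : K) := rfl
    rw [this]; exact Submodule.add_mem _ hx hy
  | smul a x _ hx =>
    have : ((a • x : ↥(powSubring A t)) : K) = (a : K) * (x : K) := rfl
    rw [this]
    exact mul_mem_smul_powSpan p a.2 hx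

lemma smul_powSpan_le_span {A : Subring K} (p : Ideal ↥A) (w : K) :
    p • powSpan A w ≤
      Submodule.span ↥A {u : K | ∃ c : ↥A, c ∈ p ∧ ∃ i : ℕ, u = (c : K) * w ^ i} := by
  rw [Submodule.smul_le]
  intro r hr n hn
  refine Submodule.span_induction (p := fun n _ => ∀ r ∈ p, r • n ∈
      Submodule.span ↥A {u : K | ∃ c : ↥A, c ∈ p ∧ ∃ i : ℕ, u = (c : K) * w ^ i})
    ?_ ?_ ?_ ?_ hn r hr
  · rintro u ⟨i, rfl⟩ r hr
    exact Submodule.subset_span ⟨r, hr, i, rfl⟩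
  · intro r _; rw [smul_zero]; exact Submodule.zero_mem _
  · intro a b _ _ ha hb r hr
    rw [smul_add]; exact Submodule.add_mem _ (ha r hr) (hb r hr)
  · intro a u _ hu r hr
    rw [smul_smul]
    exact hu (r * a) (p.mul_mem_right a hr)

lemma exists_pow_relation {A : Subring K} [IsLocalRing ↥A] (p : Ideal ↥A) (hp : p.IsPrime)
    {w z : K} (hwz : w * z = 1) (h1 : (1 : K) ∈ p • powSpan A w) :
    ∃ n : ℕ, 0 < n ∧ z ^ n ∈ Submodule.span ↥A ((fun i => z ^ i) '' Set.Iio n) := by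
  have h1' := Submodule.mem_span_set'.mp (smul_powSpan_le_span p w h1)
  obtain ⟨m, f, g, hsum⟩ := h1'
  choose c hcp i hgi using fun j : Fin m => (g j).2
  set n := Finset.univ.sup i with hn
  have hin : ∀ j, i j ≤ n := fun j => Finset.le_sup (Finset.mem_univ j)
  have hwzi : ∀ k : ℕ, k ≤ n → w ^ k * z ^ n = z ^ (n - k) := by
    intro k hk
    have h : z ^ n = z ^ k * z ^ (n - k) := by rw [← pow_add, Nat.add_sub_cancel' hk]
    rw [h, ← mul_assoc, ← mul_pow, hwz, one_pow, one_mul]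
  have key : z ^ n = ∑ j : Fin m, ((f j * c j : ↥A) : K) * z ^ (n - i j) := by
    calc z ^ n = (∑ j : Fin m, f j • ((g j : K))) * z ^ n := by rw [hsum, one_mul]
      _ = ∑ j : Fin m, ((f j * c j : ↥A) : K) * z ^ (n - i j) := by
          rw [Finset.sum_mul]
          refine Finset.sum_congr rfl fun j _ => ?_
          have hsm : f j • ((g j : K)) = (f j : K) * (g j : K) := rfl
          rw [hsm, hgi j, ← hwzi (i j) (hin j)]
          push_cast
          ring
  set F := Finset.univ.filter (fun j : Fin m => i j = 0) with hF
  set cs : ↥A := ∑ j ∈ F, f j * c j with hcs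
  have hcsp : cs ∈ p := Submodule.sum_mem _ fun j _ => p.mul_mem_left (f j) (hcp j)
  have hsplitsum : z ^ n = ((cs : K)) * z ^ n
      + ∑ j ∈ Finset.univ.filter (fun j : Fin m => ¬ i j = 0),
        ((f j * c j : ↥A) : K) * z ^ (n - i j) := by
    conv_lhs => rw [key,
      ← Finset.sum_filter_add_sum_filter_not Finset.univ (fun j : Fin m => i j = 0)]
    congr 1
    rw [hcs]
    push_cast
    rw [Finset.sum_mul]
    exact Finset.sum_congr rfl fun j hj => by
      rw [(Finset.mem_filter.mp hj).2, Nat.sub_zero]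
  have hsplit : (1 - (cs : K)) * z ^ n
      = ∑ j ∈ Finset.univ.filter (fun j : Fin m => ¬ i j = 0),
        ((f j * c j : ↥A) : K) * z ^ (n - i j) := by
    linear_combination hsplitsum
  have hn0 : n ≠ 0 := by
    intro h0
    have hFall : ∀ j, i j = 0 := fun j => Nat.le_zero.mp (h0 ▸ hin j)
    have hempty : Finset.univ.filter (fun j : Fin m => ¬ i j = 0) = ∅ :=
      Finset.filter_false_of_mem (fun j _ => not_not_intro (hFall j))
    rw [hempty, Finset.sum_empty, h0, pow_zero, mul_one, sub_eq_zero] at hsplit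
    have h1cs : (1 : ↥A) = cs := Subtype.ext (by exact_mod_cast hsplit)
    exact hp.ne_top ((Ideal.eq_top_iff_one p).mpr (h1cs ▸ hcsp))
  have hcsm : cs ∈ nonunits ↥A := by
    have hle := IsLocalRing.le_maximalIdeal hp.ne_top
    exact (IsLocalRing.mem_maximalIdeal cs).mp (hle hcsp)
  have hu : IsUnit ((1 : ↥A) - cs) := IsLocalRing.isUnit_one_sub_self_of_mem_nonunits _ hcsm
  obtain ⟨v, hv⟩ : ∃ v : ↥A, v * (1 - cs) = 1 := ⟨↑hu.unit⁻¹, hu.val_inv_mul⟩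
  refine ⟨n, Nat.pos_of_ne_zero hn0, ?_⟩
  have hvK : ((v : K)) * (1 - (cs : K)) = 1 := by exact_mod_cast congrArg (Subtype.val) hv
  have hzn : z ^ n = ∑ j ∈ Finset.univ.filter (fun j : Fin m => ¬ i j = 0),
      ((v * (f j * c j) : ↥A) : K) * z ^ (n - i j) := by
    calc z ^ n = ((v : K) * (1 - (cs : K))) * z ^ n := by rw [hvK, one_mul]
      _ = (v : K) * ((1 - (cs : K)) * z ^ n) := by ring
      _ = (v : K) * ∑ j ∈ Finset.univ.filter (fun j : Fin m => ¬ i j = 0),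
            ((f j * c j : ↥A) : K) * z ^ (n - i j) := by rw [hsplit]
      _ = _ := by
          rw [Finset.mul_sum]
          exact Finset.sum_congr rfl fun j hj => by push_cast; ring
  rw [hzn]
  refine Submodule.sum_mem _ fun j hj => ?_
  have hij : i j ≠ 0 := (Finset.mem_filter.mp hj).2
  have hterm : ((v * (f j * c j) : ↥A) : K) * z ^ (n - i j)
      = (v * (f j * c j)) • (z ^ (n - i j)) := rfl
  rw [hterm]
  exact Submodule.smul_mem _ _ (Submodule.subset_span
    ⟨n - i j, Set.mem_Iio.mpr (Nat.sub_lt (Nat.pos_of_ne_zero hn0) (Nat.pos_of_ne_zero hij)), rfl⟩)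

end StraightAux

/-- Let `A` be a local domain with fraction field `K` and `p` a prime ideal of `A`.
If `A` is straight at `p`, then `p` is divided: `p·A_p = p` (as subsets of `K`). -/
theorem stmt3 {K : Type*} [Field K] (A : Subring K) [IsLocalRing ↥A] [IsFractionRing ↥A K]
    (p : Ideal A) [p.IsPrime] (hst : IsStraightAt A p) :
    locSet A p p = Subtype.val '' (p : Set ↥A) := by
  have hp : p.IsPrime := inferInstance
  ext z0
  constructor
  · rintro ⟨x, hx, y, hy, rfl⟩
    have hy0 : (y : K) ≠ 0 := by
      intro h
      exact hy (by rw [show y = 0 from Subtype.ext h]; exact p.zero_mem)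
    by_cases hx0 : (x : K) = 0
    · exact ⟨0, p.zero_mem, by simp [hx0]⟩
    set z : K := (x : K) / (y : K) with hzdef
    -- Step 1: apply straightness to A[y/x] to deduce 1 ∈ p•A[y/x]
    set w : K := (y : K) / (x : K) with hwdef
    have hwz : w * z = 1 := by
      rw [hwdef, hzdef]
      field_simp
    have hAB1 : A ≤ powSubring A w := le_powSubring A w
    have hwB : w ∈ powSubring A w := by
      have := pow_mem_powSpan A w 1
      rwa [pow_one] at this
    have h1mem : (1 : ↥(powSubring A w)) ∈ p.map (Subring.inclusion hAB1) := by
      refine hst _ hAB1 y hy 1 ?_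
      have heq : Subring.inclusion hAB1 y * 1
          = Subring.inclusion hAB1 x * (⟨w, hwB⟩ : ↥(powSubring A w)) := by
        apply Subtype.ext
        show (y : K) * 1 = (x : K) * w
        rw [hwdef]
        field_simp
      rw [heq]
      exact Ideal.mul_mem_right _ _ (Ideal.mem_map_of_mem _ hx)
    have h1K : (1 : K) ∈ p • powSpan A w := by
      have := map_le_smul_powSpan p w hAB1 1 h1mem
      simpa using this
    obtain ⟨n, hnpos, hrel⟩ := exists_pow_relation p hp hwz h1K
    -- Step 2: apply straightness to A[z] to deduce z ∈ p•A[z]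
    have hAB2 : A ≤ powSubring A z := le_powSubring A z
    have hzB : z ∈ powSubring A z := by
      have := pow_mem_powSpan A z 1
      rwa [pow_one] at this
    have hzmem : (⟨z, hzB⟩ : ↥(powSubring A z)) ∈ p.map (Subring.inclusion hAB2) := by
      refine hst _ hAB2 y hy _ ?_
      have heq : Subring.inclusion hAB2 y * (⟨z, hzB⟩ : ↥(powSubring A z))
          = Subring.inclusion hAB2 x := by
        apply Subtype.ext
        show (y : K) * z = (x : K)
        rw [hzdef]
        field_simp
      rw [heq]
      exact Ideal.mem_map_of_mem _ hx
    have hzp : z ∈ p • powSpan A z := by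
      have := map_le_smul_powSpan p z hAB2 _ hzmem
      simpa using this
    -- Step 3: A[z] is a finitely generated A-module
    set N : Submodule ↥A K := Submodule.span ↥A ((fun i => z ^ i) '' Set.Iio n) with hNdef
    have hzN : ∀ u ∈ N, z * u ∈ N := by
      intro u hu
      induction hu using Submodule.span_induction with
      | mem u hu =>
        obtain ⟨j, hj, rfl⟩ := hu
        by_cases hjn : j + 1 < n
        · exact Submodule.subset_span ⟨j + 1, hjn, by simp [pow_succ, mul_comm]⟩
        · have hjeq : j + 1 = n := le_antisymm (Set.mem_Iio.mp hj) (not_lt.mp hjn)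
          have : z * z ^ j = z ^ n := by rw [← hjeq, pow_succ, mul_comm]
          rw [show (fun i => z ^ i) j = z ^ j from rfl, this]
          exact hrel
      | zero => rw [mul_zero]; exact N.zero_mem
      | add a b _ _ ha hb => rw [mul_add]; exact N.add_mem ha hb
      | smul a u _ hu => rw [mul_smul_comm]; exact N.smul_mem a hu
    have hpow : ∀ m : ℕ, z ^ m ∈ N := by
      intro m
      induction m with
      | zero => exact Submodule.subset_span ⟨0, Set.mem_Iio.mpr hnpos, rfl⟩
      | succ k ih =>
        have := hzN _ ih
        rwa [← pow_succ'] at this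
    have hPSN : powSpan A z ≤ N := Submodule.span_le.mpr (by rintro u ⟨j, rfl⟩; exact hpow j)
    have hNPS : N ≤ powSpan A z :=
      Submodule.span_le.mpr (by rintro u ⟨j, _, rfl⟩; exact pow_mem_powSpan A z j)
    have hFG : (powSpan A z).FG := by
      rw [le_antisymm hPSN hNPS]
      exact Submodule.fg_span ((Set.finite_Iio n).image _)
    -- Step 4: Nakayama
    set M0 : Submodule ↥A K := Submodule.span ↥A {(1 : K)} with hM0
    have hle : powSpan A z ≤ M0 ⊔ p • powSpan A z := by
      rw [powSpan, Submodule.span_le]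
      rintro u ⟨j, rfl⟩
      match j with
      | 0 =>
        refine Submodule.mem_sup_left ?_
        show z ^ 0 ∈ M0
        rw [pow_zero]
        exact Submodule.mem_span_singleton_self 1
      | (k + 1) =>
        refine Submodule.mem_sup_right ?_
        show z ^ (k + 1) ∈ p • powSpan A z
        have := mul_mem_smul_powSpan p (pow_mem_powSpan A z k) hzp
        rwa [← pow_succ] at this
    have hjac : p ≤ Ideal.jacobson ⊥ := by
      rw [IsLocalRing.jacobson_eq_maximalIdeal ⊥ bot_ne_top]
      exact IsLocalRing.le_maximalIdeal hp.ne_top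
    have hfin : powSpan A z ≤ M0 := Submodule.le_of_le_smul_of_le_jacobson_bot hFG hjac hle
    have hzM0 : z ∈ M0 := by
      have := hfin (by simpa using pow_mem_powSpan A z 1)
      exact this
    obtain ⟨a, ha⟩ := Submodule.mem_span_singleton.mp hzM0
    have haz : (a : K) = z := by
      have h : (a : K) * 1 = z := ha
      simpa using h
    refine ⟨a, ?_, haz⟩
    have hay : a * y ∈ p := by
      have he : a * y = x := by
        apply Subtype.ext
        push_cast
        rw [haz, hzdef]
        field_simp
      rw [he]
      exact hx
    exact (hp.mem_or_mem hay).resolve_right hy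
  · rintro ⟨a, hap, rfl⟩
    exact ⟨a, hap, 1, fun h => hp.ne_top ((Ideal.eq_top_iff_one p).mpr h), by simp⟩
end

section
/- Let A be an integral domain and p a prime ideal of A. Then A is straight at p if and only if A_m is straight at pA_m for every maximal ideal m of A containing p. (In particular, straightness at a prime is a local property.) -/
lemma clear_denom {K : Type*} [Field K] {A C : Subring K} (hle : A ≤ C)
    (p m : Ideal A) (hm : m.IsPrime) (D : Set K)
    (hD0 : (0:K) ∈ D)
    (hDadd : ∀ x ∈ D, ∀ y ∈ D, x + y ∈ D)
    (hDgen : ∀ q : ↥A, q ∈ p → (q:K) ∈ D)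
    (hDA : ∀ t : ↥A, ∀ w ∈ D, (t:K) * w ∈ D)
    (hC : ∀ c : ↥C, ∃ t : ↥A, t ∉ m ∧ ∀ w ∈ D, (t:K) * (c:K) * w ∈ D) :
    ∀ z : ↥C, z ∈ p.map (Subring.inclusion hle) →
      ∃ s : ↥A, s ∉ m ∧ (s:K) * (z:K) ∈ D := by
  have h1 : (1 : ↥A) ∉ m := fun h => hm.ne_top (m.eq_top_of_isUnit_mem h isUnit_one)
  intro z hz
  have hz' : z ∈ Submodule.span ↥C ((Subring.inclusion hle) '' (p : Set ↥A)) := hz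
  refine Submodule.span_induction (p := fun (x : ↥C) _ => ∃ s : ↥A, s ∉ m ∧ (s:K) * (x:K) ∈ D)
    ?_ ?_ ?_ ?_ hz'
  · rintro x ⟨q, hq, rfl⟩
    exact ⟨1, h1, by simpa using hDgen q hq⟩
  · exact ⟨1, h1, by simpa using hD0⟩
  · rintro x y hx hy ⟨s1, hs1, hd1⟩ ⟨s2, hs2, hd2⟩
    refine ⟨s1 * s2, fun h => (hm.mem_or_mem h).elim hs1 hs2, ?_⟩
    have := hDadd _ (hDA s2 _ hd1) _ (hDA s1 _ hd2)
    convert this using 1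
    push_cast
    ring
  · rintro c x hx ⟨s, hs, hd⟩
    obtain ⟨t, ht, htc⟩ := hC c
    refine ⟨t * s, fun h => (hm.mem_or_mem h).elim ht hs, ?_⟩
    have := htc _ hd
    convert this using 1
    push_cast [show ((c • x : ↥C) : K) = (c:K) * (x:K) from rfl]
    ring

/-- Straightness at a prime is a local property: a domain `A` (with fraction field `K`)
is straight at the prime `p` iff for every maximal ideal `m ⊇ p`, the localization
`A_m` (as a subring of `K`) is straight at the extension `p·A_m`. -/
theorem stmt4 {K : Type*} [Field K] (A : Subring K) [IsFractionRing ↥A K]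
    (p : Ideal A) [p.IsPrime] :
    IsStraightAt A p ↔
      ∀ (m : Ideal A) (hm : m.IsMaximal), p ≤ m →
        ∀ (hle : A ≤ locSubring A m hm.isPrime),
          IsStraightAt (locSubring A m hm.isPrime) (p.map (Subring.inclusion hle)) := by
  constructor
  · -- forward: straightness passes to localizations
    intro hA m hm hpm hle B hA'B a' ha' b hab
    have hAB : A ≤ B := hle.trans hA'B
    have hmap : (p.map (Subring.inclusion hle)).map (Subring.inclusion hA'B)
        = p.map (Subring.inclusion hAB) := by
      rw [Ideal.map_map]
      congr 1
    rw [hmap] at hab ⊢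
    obtain ⟨x, y, hy, hxy⟩ := a'.2
    have hy0 : (y : K) ≠ 0 := fun h =>
      hy (by rw [show y = 0 from Subtype.ext h]; exact m.zero_mem)
    -- x ∉ p, else a' ∈ p·A_m
    have hx : x ∉ p := by
      intro hxp
      apply ha'
      have hu : (1 : K) / (y : K) ∈ locSubring A m hm.isPrime := ⟨1, y, hy, by norm_cast⟩
      have : a' = (⟨(1:K)/(y:K), hu⟩ : ↥(locSubring A m hm.isPrime))
          * Subring.inclusion hle x := by
        apply Subtype.ext
        show (a' : K) = (1 / (y:K)) * (x : K)
        rw [hxy]; field_simp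
      rw [this]
      exact Ideal.mul_mem_left _ _ (Ideal.mem_map_of_mem _ hxp)
    -- x·b = y·(a'·b) ∈ p·B
    have hx_eq : Subring.inclusion hAB x * b
        = Subring.inclusion hAB y * (Subring.inclusion hA'B a' * b) := by
      apply Subtype.ext
      show (x : K) * (b : K) = (y : K) * ((a' : K) * (b : K))
      rw [hxy]; field_simp
    exact hA B hAB x hx b (by rw [hx_eq]; exact Ideal.mul_mem_left _ _ hab)
  · -- reverse
    intro h B hAB a ha b hab
    -- the "conductor" ideal I = {x : x·b ∈ pB}
    let I : Ideal ↥A :=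
      { carrier := {x : ↥A | Subring.inclusion hAB x * b ∈ p.map (Subring.inclusion hAB)}
        zero_mem' := by
          show Subring.inclusion hAB 0 * b ∈ p.map (Subring.inclusion hAB)
          rw [map_zero, zero_mul]; exact Ideal.zero_mem _
        add_mem' := by
          intro x y hx hy
          replace hx : Subring.inclusion hAB x * b ∈ p.map (Subring.inclusion hAB) := hx
          replace hy : Subring.inclusion hAB y * b ∈ p.map (Subring.inclusion hAB) := hy
          show Subring.inclusion hAB (x + y) * b ∈ p.map (Subring.inclusion hAB)
          rw [map_add, add_mul]; exact Ideal.add_mem _ hx hy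
        smul_mem' := by
          intro r x hx
          replace hx : Subring.inclusion hAB x * b ∈ p.map (Subring.inclusion hAB) := hx
          show Subring.inclusion hAB (r * x) * b ∈ p.map (Subring.inclusion hAB)
          rw [map_mul, mul_assoc]; exact Ideal.mul_mem_left _ _ hx }
    by_contra hb
    have hItop : I ≠ ⊤ := by
      intro hI
      apply hb
      have h1I : Subring.inclusion hAB (1 : ↥A) * b ∈ p.map (Subring.inclusion hAB) :=
        (hI ▸ Submodule.mem_top : (1 : ↥A) ∈ I)
      simpa using h1I
    obtain ⟨m, hm, hIm⟩ := Ideal.exists_le_maximal I hItop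
    have hpI : p ≤ I := fun x hx =>
      Ideal.mul_mem_right _ _ (Ideal.mem_map_of_mem _ hx)
    have hpm : p ≤ m := hpI.trans hIm
    have h1m : (1 : ↥A) ∉ m := fun hh => hm.ne_top (m.eq_top_of_isUnit_mem hh isUnit_one)
    set L := locSubring A m hm.isPrime with hL
    have hle : A ≤ L := fun z hz => ⟨⟨z, hz⟩, 1, h1m, by simp⟩
    set B' := B ⊔ L with hB'
    have hBB' : B ≤ B' := le_sup_left
    have hLB' : L ≤ B' := le_sup_right
    have hAB' : A ≤ B' := hAB.trans hBB'
    have hmap : (p.map (Subring.inclusion hle)).map (Subring.inclusion hLB')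
        = p.map (Subring.inclusion hAB') := by
      rw [Ideal.map_map]; congr 1
    -- a ∉ p·A_m
    have ha' : Subring.inclusion hle a ∉ p.map (Subring.inclusion hle) := by
      intro hmem
      obtain ⟨s, hs, q, hq, heq⟩ := clear_denom hle p m hm.isPrime
        {w : K | ∃ q : ↥A, q ∈ p ∧ (q : K) = w}
        ⟨0, p.zero_mem, by simp⟩
        (by rintro _ ⟨q1, hq1, rfl⟩ _ ⟨q2, hq2, rfl⟩
            exact ⟨q1 + q2, p.add_mem hq1 hq2, by push_cast; ring⟩)
        (fun q hq => ⟨q, hq, rfl⟩)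
        (by rintro t _ ⟨q, hq, rfl⟩
            exact ⟨t * q, Ideal.mul_mem_left _ _ hq, by push_cast; ring⟩)
        (by -- hC for L: clear denominators within A
            rintro c
            obtain ⟨u, v, hv, hc⟩ := c.2
            have hv0 : (v : K) ≠ 0 := fun hh =>
              hv (by rw [show v = 0 from Subtype.ext hh]; exact m.zero_mem)
            refine ⟨v, hv, ?_⟩
            rintro _ ⟨q, hq, rfl⟩
            refine ⟨u * q, Ideal.mul_mem_left _ _ hq, ?_⟩
            push_cast
            rw [hc]; field_simp)
        _ hmem
      have : s * a = q := Subtype.ext (by push_cast; exact heq.symm)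
      have hsa : s * a ∈ p := this ▸ hq
      rcases (‹p.IsPrime›.mem_or_mem hsa) with hsp | hap
      · exact hs (hpm hsp)
      · exact ha hap
    -- apply straightness of A_m in the overring B' = B·A_m
    have hab' : Subring.inclusion hLB' (Subring.inclusion hle a) * Subring.inclusion hBB' b
        ∈ (p.map (Subring.inclusion hle)).map (Subring.inclusion hLB') := by
      rw [hmap]
      have : Subring.inclusion hLB' (Subring.inclusion hle a) * Subring.inclusion hBB' b
          = Subring.inclusion hBB' (Subring.inclusion hAB a * b) := Subtype.ext rfl
      have hmapB : (p.map (Subring.inclusion hAB)).map (Subring.inclusion hBB')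
          = p.map (Subring.inclusion hAB') := by rw [Ideal.map_map]; congr 1
      rw [this, ← hmapB]
      exact Ideal.mem_map_of_mem _ hab
    have hb' := h m hm hpm hle B' hLB' (Subring.inclusion hle a) ha'
      (Subring.inclusion hBB' b) hab'
    rw [hmap] at hb'
    -- clear denominators: some s ∉ m has s·b ∈ pB, so s ∈ I ≤ m, contradiction
    obtain ⟨s, hs, c, hc, heq⟩ := clear_denom hAB' p m hm.isPrime
      {w : K | ∃ c : ↥B, c ∈ p.map (Subring.inclusion hAB) ∧ (c : K) = w}
      ⟨0, Ideal.zero_mem _, by simp⟩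
      (by rintro _ ⟨c1, hc1, rfl⟩ _ ⟨c2, hc2, rfl⟩
          exact ⟨c1 + c2, Ideal.add_mem _ hc1 hc2, by push_cast; ring⟩)
      (fun q hq => ⟨Subring.inclusion hAB q, Ideal.mem_map_of_mem _ hq, rfl⟩)
      (by rintro t _ ⟨c, hc, rfl⟩
          exact ⟨Subring.inclusion hAB t * c, Ideal.mul_mem_left _ _ hc, by push_cast; rfl⟩)
      (by -- hC for B': clear denominators into B
          rintro c
          have hcmem : (c : K) ∈ Subring.closure ((B : Set K) ∪ (L : Set K)) := by
            rw [Subring.closure_union, Subring.closure_eq, Subring.closure_eq]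
            exact c.2
          have key : ∃ t : ↥A, t ∉ m ∧ (t : K) * (c : K) ∈ B := by
            refine Subring.closure_induction
              (p := fun (w : K) _ => ∃ t : ↥A, t ∉ m ∧ (t : K) * w ∈ B)
              ?_ ?_ ?_ ?_ ?_ ?_ hcmem
            · rintro w (hw | ⟨u, v, hv, rfl⟩)
              · exact ⟨1, h1m, by simpa using hw⟩
              · have hv0 : (v : K) ≠ 0 := fun hh =>
                  hv (by rw [show v = 0 from Subtype.ext hh]; exact m.zero_mem)
                refine ⟨v, hv, ?_⟩
                have : (v : K) * ((u : K) / (v : K)) = (u : K) := by field_simp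
                rw [this]; exact hAB u.2
            · exact ⟨1, h1m, by simpa using B.zero_mem⟩
            · exact ⟨1, h1m, by simpa using B.one_mem⟩
            · rintro w1 w2 _ _ ⟨t1, ht1, hb1⟩ ⟨t2, ht2, hb2⟩
              refine ⟨t1 * t2, fun hh => (hm.isPrime.mem_or_mem hh).elim ht1 ht2, ?_⟩
              have : ((t1 * t2 : ↥A) : K) * (w1 + w2)
                  = ((t2 : ↥A) : K) * ((t1 : K) * w1) + ((t1 : ↥A) : K) * ((t2 : K) * w2) := by
                push_cast; ring
              rw [this]
              exact B.add_mem (B.mul_mem (hAB t2.2) hb1) (B.mul_mem (hAB t1.2) hb2)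
            · rintro w _ ⟨t, ht, hbw⟩
              exact ⟨t, ht, by rw [mul_neg]; exact B.neg_mem hbw⟩
            · rintro w1 w2 _ _ ⟨t1, ht1, hb1⟩ ⟨t2, ht2, hb2⟩
              refine ⟨t1 * t2, fun hh => (hm.isPrime.mem_or_mem hh).elim ht1 ht2, ?_⟩
              have : ((t1 * t2 : ↥A) : K) * (w1 * w2)
                  = ((t1 : K) * w1) * ((t2 : K) * w2) := by push_cast; ring
              rw [this]
              exact B.mul_mem hb1 hb2
          obtain ⟨t, ht, htc⟩ := key
          refine ⟨t, ht, ?_⟩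
          rintro _ ⟨c', hc', rfl⟩
          exact ⟨(⟨(t : K) * (c : K), htc⟩ : ↥B) * c', Ideal.mul_mem_left _ _ hc', rfl⟩)
      _ hb'
    -- so s ∈ I but s ∉ m, contradicting I ≤ m
    have hsI : s ∈ I := by
      show Subring.inclusion hAB s * b ∈ p.map (Subring.inclusion hAB)
      have : Subring.inclusion hAB s * b = c := Subtype.ext (by push_cast; exact heq.symm)
      rw [this]; exact hc
    exact hs (hIm hsI)
end

section
/- Let A be an integral domain and p a prime ideal of A. If p is a locally divided prime ideal of A, then A is straight at p; that is, for every overring B of A, the (A/p)-module B/pB is torsion-free. -/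
/-- If `p` is a locally divided prime ideal of the domain `A` (with fraction field `K`),
i.e. `p·A_m = p·A_p` for every maximal ideal `m ⊇ p`, then `A` is straight at `p`. -/
theorem stmt6 {K : Type*} [Field K] (A : Subring K) [IsFractionRing ↥A K]
    (p : Ideal A) [p.IsPrime] (h : IsLocallyDividedAt A p) :
    IsStraightAt A p := by
  intro B hAB a ha b hab
  set f := Subring.inclusion hAB with hf
  set P := p.map f with hP
  have coe_incl : ∀ x : ↥A, ((f x : ↥B) : K) = (x : K) := fun x => rfl
  -- the conductor ideal J = {c ∈ A : c·b ∈ pB}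
  set J : Ideal ↥A :=
    { carrier := {c | f c * b ∈ P}
      add_mem' := fun {c d} hc hd => by
        simp only [Set.mem_setOf_eq, map_add, add_mul] at *
        exact add_mem hc hd
      zero_mem' := by simp only [Set.mem_setOf_eq, map_zero, zero_mul]; exact P.zero_mem
      smul_mem' := fun c x hx => by
        simp only [Set.mem_setOf_eq, smul_eq_mul, map_mul, mul_assoc] at *
        exact P.mul_mem_left _ hx } with hJ
  -- it suffices to show J = ⊤
  suffices hJtop : J = ⊤ by
    have h1 : (1 : ↥A) ∈ J := hJtop ▸ Submodule.mem_top
    have h2 : f 1 * b ∈ P := h1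
    simpa using h2
  by_contra hne
  obtain ⟨m, hm, hJm⟩ := Ideal.exists_le_maximal J hne
  -- p ≤ J ≤ m
  have hpJ : p ≤ J := fun t ht => P.mul_mem_right b (Ideal.mem_map_of_mem f ht)
  have hpm : p ≤ m := hpJ.trans hJm
  have hloc := h m hm hpm
  have haK : (a : K) ≠ 0 := fun h0 => ha (by rw [show a = 0 from Subtype.ext h0]; exact p.zero_mem)
  -- key: for every w ∈ P, there is s ∉ m and w' ∈ P with s·w = a·w' in K
  have key : ∀ w : ↥B, w ∈ P → ∃ s : ↥A, s ∉ m ∧ ∃ w' : ↥B, w' ∈ P ∧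
      (s : K) * (w : K) = (a : K) * (w' : K) := by
    intro w hw
    rw [hP, Ideal.map] at hw
    refine Submodule.span_induction ?_ ?_ ?_ ?_ hw
    · rintro _ ⟨x, hx, rfl⟩
      have hxm : (x : K) / (a : K) ∈ locSet A p p := ⟨x, hx, a, ha, rfl⟩
      rw [← hloc] at hxm
      obtain ⟨x', hx', s, hs, heq⟩ := hxm
      have hsK : (s : K) ≠ 0 := fun h0 => hs (by rw [show s = 0 from Subtype.ext h0]; exact m.zero_mem)
      refine ⟨s, hs, f x', Ideal.mem_map_of_mem f hx', ?_⟩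
      rw [coe_incl, coe_incl]
      field_simp at heq
      rw [mul_comm (x : K) (s : K)] at heq
      rw [heq]
    · exact ⟨1, fun h1 => hm.ne_top (m.eq_top_of_isUnit_mem h1 isUnit_one), 0,
        P.zero_mem, by simp⟩
    · rintro w1 w2 _ _ ⟨s1, hs1, w1', hw1', he1⟩ ⟨s2, hs2, w2', hw2', he2⟩
      refine ⟨s1 * s2, fun hmem => (hm.isPrime.mem_or_mem hmem).elim hs1 hs2,
        f s2 * w1' + f s1 * w2', add_mem (P.mul_mem_left _ hw1') (P.mul_mem_left _ hw2'), ?_⟩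
      push_cast
      rw [coe_incl, coe_incl]
      calc (s1 : K) * s2 * (w1 + w2) = s2 * ((s1:K) * w1) + s1 * ((s2:K) * w2) := by ring
        _ = (a:K) * ((s2:K) * w1' + (s1:K) * w2') := by rw [he1, he2]; ring
    · rintro r w _ ⟨s, hs, w', hw', he⟩
      refine ⟨s, hs, r * w', P.mul_mem_left r hw', ?_⟩
      push_cast
      calc (s : K) * ((r : K) * w) = (r : K) * ((s:K) * w) := by ring
        _ = (a:K) * ((r:K) * w') := by rw [he]; ring
  obtain ⟨s, hs, w', hw', he⟩ := key _ hab
  -- cancel a: s·b = w'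
  have hb : f s * b = w' := by
    apply Subtype.ext
    push_cast at he ⊢
    rw [coe_incl] at he
    have : (a:K) * ((s:K) * (b:K)) = (a:K) * (w' : K) := by
      rw [← he]; ring
    exact mul_left_cancel₀ haK this
  exact hs (hJm (show f s * b ∈ P from hb ▸ hw'))
end

section
/- Let A be an integral domain and p a prime ideal of A. Then p is a straight prime ideal of A if and only if p is a locally divided prime ideal of A. -/
/-!
Straight implies locally divided: given `x ∈ p`, `y ∉ p` and a prime `m ⊇ p`, let `R = A_m` and
`u = x / y`. Straightness for the overring `R[y/x]`, where `y · 1 = x · (y/x)`, puts `1` in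
`p R[y/x] ⊆ m R[y/x]`, which makes `u` integral over the local ring `R`. Straightness for `R[u]`,
where `y · u = x`, puts `u` in `p R[u]`; as `R[u] = R + u R[u]` is a finite `R`-module, Nakayama
gives `R[u] = R`, hence `u ∈ p R = p A_m`.

Locally divided implies straight: if `a b ∈ pB` with `a ∉ p`, the ideal of those `s ∈ A` with
`s b ∈ pB` contains `p`. For a maximal `m ⊇ p`, writing `π / a ∈ p A_p = p A_m` as `x / s` with
`s ∉ m` for each generator `π` of `pB` produces such an `s` outside `m`, so the ideal is `A`.
-/

open Polynomial IsLocalRing Algebra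

section Integral

variable {R L : Type*} [CommRing R] [CommRing L] [Algebra R L]

theorem isIntegral_invOf_of_one_mem_map_adjoin [IsLocalRing R] {v : L} [Invertible v]
    (h : 1 ∈ (maximalIdeal R).map (algebraMap R R[v])) : IsIntegral R (⅟v) := by
  obtain ⟨P, hP, hPv⟩ := exists_aeval_invOf_eq_zero_of_idealMap_adjoin_sup_span_eq_top v
    _ (maximalIdeal.isMaximal R).ne_top
    (top_unique <| (Ideal.eq_top_iff_one _).mpr h |>.ge.trans le_sup_left)
  have hunit : IsUnit P.leadingCoeff := of_not_not fun h ↦ by simpa using sub_mem h hP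
  exact ⟨C hunit.unit⁻¹.1 * P, monic_C_mul_of_mul_leadingCoeff_eq_one hunit.val_inv_mul,
    by simp [← aeval_def, hPv]⟩

theorem exists_mem_algebraMap_eq_of_mem_map_adjoin {I : Ideal R} (hI : I ≤ Ideal.jacobson ⊥) {u : L}
    (hu : IsIntegral R u) (h : ⟨u, self_mem_adjoin_singleton R u⟩ ∈ I.map (algebraMap R R[u])) :
    ∃ r ∈ I, algebraMap R L r = u := by
  have : Module.Finite R R[u] := finite_adjoin_simple_of_isIntegral hu
  have hdecomp : (⊤ : Submodule R R[u]) ≤ (⊥ : Subalgebra R R[u]).toSubmodule ⊔ I • ⊤ := by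
    rintro s -
    obtain ⟨Q, hQ⟩ := adjoin_eq_exists_aeval R u s
    rw [Ideal.smul_top_eq_map, Submodule.mem_sup]
    refine ⟨algebraMap R _ (Q.coeff 0), Subalgebra.algebraMap_mem _ _,
      _ * aeval ⟨u, self_mem_adjoin_singleton R u⟩ Q.divX, Ideal.mul_mem_right _ _ h, ?_⟩
    apply Subtype.ext
    rw [← hQ]
    conv_rhs => rw [← Q.divX_mul_X_add]
    simp only [Subalgebra.coe_add, Subalgebra.coe_mul, Subalgebra.coe_algebraMap,
      aeval_subalgebra_coe, map_add, map_mul, aeval_X, aeval_C]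
    ring
  have hsurj : Function.Surjective (algebraMap R R[u]) := fun s ↦ mem_bot.mp <|
    Submodule.le_of_le_smul_of_le_jacobson_bot Module.Finite.fg_top hI hdecomp Submodule.mem_top
  obtain ⟨r, hrI, hr⟩ := (Ideal.mem_map_iff_of_surjective _ hsurj).mp h
  exact ⟨r, hrI, congrArg Subtype.val hr⟩

end Integral

section Subring

variable {K : Type*} [Field K] {A : Subring K} {p : Ideal A}

theorem coe_ne_zero_of_notMem {I : Ideal A} {a : A} (ha : a ∉ I) : (a : K) ≠ 0 :=
  fun h ↦ ha (by rw [show a = 0 from Subtype.ext h]; exact I.zero_mem)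

theorem locSet_subset_of_le {m m' : Ideal A} (h : m ≤ m') : locSet A p m' ⊆ locSet A p m :=
  fun _ ⟨x, hx, y, hy, e⟩ ↦ ⟨x, hx, y, fun hym ↦ hy (h hym), e⟩

theorem coe_mem_locSet_of_mem_map {m : Ideal A} [m.IsPrime]
    {r : (LocalSubring.ofPrime A m).toSubring} (hr : r ∈ p.map (algebraMap A _)) :
    (r : K) ∈ locSet A p m := by
  obtain ⟨⟨⟨x, hx⟩, ⟨s, hs⟩⟩, e⟩ := (IsLocalization.mem_map_algebraMap_iff m.primeCompl _).mp hr
  exact ⟨x, hx, s, hs, eq_div_of_mul_eq (coe_ne_zero_of_notMem hs) (congrArg Subtype.val e)⟩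

theorem map_algebraMap_ofPrime_le_maximalIdeal {m : Ideal A} [m.IsPrime] (hpm : p ≤ m) :
    p.map (algebraMap A (LocalSubring.ofPrime A m).toSubring) ≤
      maximalIdeal (LocalSubring.ofPrime A m).toSubring :=
  IsLocalization.AtPrime.map_eq_maximalIdeal m (LocalSubring.ofPrime A m).toSubring ▸
    Ideal.map_mono hpm

theorem map_inclusion_eq_map_map {R : Subring K} (hAR : A ≤ R) (B : Subalgebra R K)
    (hAB : A ≤ B.toSubring) :
    p.map (Subring.inclusion hAB) = (p.map (Subring.inclusion hAR)).map (algebraMap R B) := by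
  rw [Ideal.map_map]; rfl

theorem IsStraightAt.mem_map_of_mul_eq (hS : IsStraightAt A p) {B : Subring K} (hAB : A ≤ B)
    {a x : A} (ha : a ∉ p) (hx : x ∈ p) {b c : B} (h : (a : K) * b = x * c) :
    b ∈ p.map (Subring.inclusion hAB) :=
  hS B hAB a ha b <| by
    rw [show Subring.inclusion hAB a * b = Subring.inclusion hAB x * c from Subtype.ext h]
    exact Ideal.mul_mem_right _ _ (Ideal.mem_map_of_mem _ hx)

theorem IsStraightAt.locSet_subset (hS : IsStraightAt A p) (m : Ideal A) [m.IsPrime]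
    (hpm : p ≤ m) : locSet A p p ⊆ locSet A p m := by
  rintro _ ⟨x, hx, y, hy, rfl⟩
  have hy0 : (y : K) ≠ 0 := coe_ne_zero_of_notMem hy
  obtain hx0 | hx0 := eq_or_ne (x : K) 0
  · exact ⟨0, p.zero_mem, 1, m.primeCompl.one_mem, by simp [hx0]⟩
  set R := (LocalSubring.ofPrime A m).toSubring
  have hAR : A ≤ R := LocalSubring.le_ofPrime A m
  have hAB (B : Subalgebra R K) : A ≤ B.toSubring := fun a ha ↦ B.algebraMap_mem ⟨a, hAR ha⟩
  have hpR := map_algebraMap_ofPrime_le_maximalIdeal hpm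
  let : Invertible ((y : K) / x) := invertibleOfNonzero (div_ne_zero hy0 hx0)
  have hint : IsIntegral R ((x : K) / y) := by
    have hone := hS.mem_map_of_mul_eq (hAB R[(y : K) / x]) hy hx (b := 1)
      (c := ⟨_, self_mem_adjoin_singleton R _⟩) (by push_cast; field_simp)
    rw [map_inclusion_eq_map_map hAR] at hone
    simpa [invOf_eq_inv] using
      isIntegral_invOf_of_one_mem_map_adjoin (Ideal.map_mono hpR hone)
  have hu := hS.mem_map_of_mul_eq (hAB R[(x : K) / y]) hy hx
    (b := ⟨_, self_mem_adjoin_singleton R _⟩) (c := 1) (by push_cast; field_simp)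
  rw [map_inclusion_eq_map_map hAR] at hu
  obtain ⟨r, hr, hru⟩ := exists_mem_algebraMap_eq_of_mem_map_adjoin
    (hpR.trans (maximalIdeal_le_jacobson ⊥)) hint hu
  exact hru ▸ coe_mem_locSet_of_mem_map hr

theorem exists_mul_eq_mul_of_mem_map {m : Ideal A} [m.IsPrime]
    (hdiv : locSet A p p ⊆ locSet A p m) {B : Subring K} (hAB : A ≤ B) {a : A} (ha : a ∉ p)
    {c : B} (hc : c ∈ p.map (Subring.inclusion hAB)) :
    ∃ s ∉ m, ∃ d ∈ p.map (Subring.inclusion hAB),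
      Subring.inclusion hAB s * c = Subring.inclusion hAB a * d := by
  set ι := Subring.inclusion hAB
  induction hc using Submodule.span_induction with
  | mem c hc =>
    obtain ⟨π, hπ, rfl⟩ := hc
    obtain ⟨x, hx, s, hs, e⟩ := hdiv ⟨π, hπ, a, ha, rfl⟩
    refine ⟨s, hs, ι x, Ideal.mem_map_of_mem _ hx, Subtype.ext ?_⟩
    rw [div_eq_div_iff (coe_ne_zero_of_notMem ha) (coe_ne_zero_of_notMem hs)] at e
    simp only [ι, Subring.coe_mul, Subring.coe_inclusion]
    linear_combination e
  | zero => exact ⟨1, m.primeCompl.one_mem, 0, Ideal.zero_mem _, by simp⟩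
  | add c c' _ _ ih ih' =>
    obtain ⟨s, hs, d, hd, e⟩ := ih
    obtain ⟨s', hs', d', hd', e'⟩ := ih'
    refine ⟨s * s', m.primeCompl.mul_mem hs hs', ι s' * d + ι s * d',
      add_mem (Ideal.mul_mem_left _ _ hd) (Ideal.mul_mem_left _ _ hd'), ?_⟩
    rw [map_mul]
    linear_combination ι s' * e + ι s * e'
  | smul r c _ ih =>
    obtain ⟨s, hs, d, hd, e⟩ := ih
    refine ⟨s, hs, r * d, Ideal.mul_mem_left _ _ hd, ?_⟩
    rw [smul_eq_mul]
    linear_combination r * e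

theorem IsLocallyDividedAt.isStraightAt (hL : IsLocallyDividedAt A p) : IsStraightAt A p := by
  intro B hAB a ha b hab
  set ι := Subring.inclusion hAB
  set J := ((p.map ι).colon (Ideal.span {b})).comap ι
  have hJ : J = ⊤ := by
    by_contra hJ
    obtain ⟨m, hm, hJm⟩ := Ideal.exists_le_maximal J hJ
    have hpJ : p ≤ J := fun π hπ ↦ by
      simpa [J, Ideal.mem_colon_span_singleton] using
        Ideal.mul_mem_right b _ (Ideal.mem_map_of_mem ι hπ)
    obtain ⟨s, hs, d, hd, e⟩ :=
      exists_mul_eq_mul_of_mem_map (hL m hm (hpJ.trans hJm)).ge hAB ha hab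
    have ha0 : ι a ≠ 0 := fun h ↦ coe_ne_zero_of_notMem ha (congrArg Subtype.val h)
    have hsb : ι s * b = d := mul_left_cancel₀ ha0 (by linear_combination e)
    exact hs (hJm (by simpa [J, Ideal.mem_colon_span_singleton, hsb] using hd))
  simpa [J, Ideal.mem_colon_span_singleton] using (Ideal.eq_top_iff_one J).mp hJ

end Subring

theorem stmt7_general {K : Type*} [Field K] (A : Subring K) (p : Ideal A) :
    IsStraightAt A p ↔ IsLocallyDividedAt A p := by
  refine ⟨fun hS m hm hpm ↦ ?_, IsLocallyDividedAt.isStraightAt⟩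
  have := hm.isPrime
  exact (locSet_subset_of_le hpm).antisymm (hS.locSet_subset m hpm)

/-- A prime ideal `p` of a domain `A` (with fraction field `K`) is straight iff
it is locally divided. -/
theorem stmt7 {K : Type*} [Field K] (A : Subring K) [IsFractionRing ↥A K]
    (p : Ideal A) [p.IsPrime] :
    IsStraightAt A p ↔ IsLocallyDividedAt A p :=
  stmt7_general A p
end

section
/- Every straight domain is a locally divided domain: if A is an integral domain such that every prime ideal of A is straight, then for every maximal ideal m of A the localization A_m is a divided domain (equivalently, every prime ideal of A is locally divided). -/
/-!
Let `B = A_m`, `q` a prime of `B`, `p = q ∩ A`, and `z = x/y` with `x ∈ p`, `y ∈ A \ p`; it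
suffices to show `z ∈ B`. Straightness of `p` in the overring `B[z⁻¹]` turns `y · 1 = x · z⁻¹`
into `1 ∈ q B[z⁻¹]`; as `q` lies in the Jacobson radical of the local ring `B`, this makes `z`
integral over `B`. Straightness in `B[z]` turns `y · z = x` into `z ∈ q B[z]`, so
`B[z] = B + q B[z]`, and Nakayama's lemma for the finite `B`-module `B[z]` gives `z ∈ B`.
-/

section

open Polynomial Algebra

theorem mem_bot_of_isIntegral_of_mem_map_adjoin {R S : Type*} [CommRing R] [CommRing S]
    [Algebra R S] {I : Ideal R} (hI : I ≤ Ideal.jacobson ⊥) {z : S} (hz : IsIntegral R z)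
    (h : ⟨z, self_mem_adjoin_singleton R z⟩ ∈ I.map (algebraMap R R[z])) :
    z ∈ (⊥ : Subalgebra R S) := by
  have : Module.Finite R R[z] := Module.Finite.iff_fg.2 hz.fg_adjoin_singleton
  have hle : (⊤ : Submodule R R[z]) ≤ 1 ⊔ I • ⊤ := by
    rintro t -
    obtain ⟨f, hf⟩ := adjoin_eq_exists_aeval R z t
    have ht : t = algebraMap R R[z] (f.coeff 0) +
        ⟨aeval z f.divX, aeval_mem_adjoin_singleton R z⟩ * ⟨z, self_mem_adjoin_singleton R z⟩ := by
      ext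
      rw [← hf]
      conv_lhs => rw [← divX_mul_X_add f]
      simp [add_comm]
    rw [Ideal.smul_top_eq_map, ht]
    exact Submodule.add_mem_sup (Submodule.algebraMap_mem _) (Ideal.mul_mem_left _ _ h)
  obtain ⟨r, hr⟩ := Submodule.mem_one.1 <|
    Submodule.le_of_le_smul_of_le_jacobson_bot Module.Finite.fg_top hI hle (Submodule.mem_top
      (x := ⟨z, self_mem_adjoin_singleton R z⟩))
  exact ⟨r, congrArg Subtype.val hr⟩

theorem isIntegral_of_map_adjoin_inv_eq_top {R K : Type*} [CommRing R] [Field K] [Algebra R K]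
    {I : Ideal R} (hI : I ≤ Ideal.jacobson ⊥) (hI' : I ≠ ⊤) {z : K} (hz : z ≠ 0)
    (h : I.map (algebraMap R R[z⁻¹]) = ⊤) : IsIntegral R z := by
  let := invertibleOfNonzero (inv_ne_zero hz)
  obtain ⟨p, hp, hpz⟩ := exists_aeval_invOf_eq_zero_of_idealMap_adjoin_sup_span_eq_top z⁻¹ I hI'
    (by rw [h, top_sup_eq])
  have hunit : IsUnit p.leadingCoeff := by
    simpa using Ideal.mem_jacobson_bot.1 (hI hp) 1
  rw [invOf_eq_inv, inv_inv] at hpz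
  exact ⟨C hunit.unit⁻¹.1 * p, monic_C_mul_of_mul_leadingCoeff_eq_one hunit.val_inv_mul,
    by rw [← aeval_def, map_mul, hpz, mul_zero]⟩

variable {K : Type*} [Field K]

theorem Subring.coe_ne_zero_of_notMem_ideal {A : Subring K} {I : Ideal A} {y : A} (hy : y ∉ I) :
    (y : K) ≠ 0 := by
  exact_mod_cast (ne_of_mem_of_not_mem I.zero_mem hy).symm

theorem IsStraightAt.mem_map_adjoin {A B : Subring K} (hAB : A ≤ B) {q : Ideal B}
    (hst : IsStraightAt A (q.comap (Subring.inclusion hAB))) {x y : A}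
    (hx : x ∈ q.comap (Subring.inclusion hAB)) (hy : y ∉ q.comap (Subring.inclusion hAB))
    {w s t : K} (hs : s ∈ B[w]) (ht : t ∈ B[w]) (h : (y : K) * t = x * s) :
    ⟨t, ht⟩ ∈ q.map (algebraMap B B[w]) := by
  have hAC : A ≤ (B[w]).toSubring := fun a ha => (B[w]).algebraMap_mem ⟨a, hAB ha⟩
  have hmap : (q.comap (Subring.inclusion hAB)).map (Subring.inclusion hAC) ≤
      q.map (algebraMap B B[w]) := by
    have : Subring.inclusion hAC = (algebraMap B B[w]).comp (Subring.inclusion hAB) := rfl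
    rw [this, ← Ideal.map_map]
    exact Ideal.map_mono Ideal.map_comap_le
  refine hmap (hst _ hAC y hy ⟨t, ht⟩ ?_)
  have : Subring.inclusion hAC y * ⟨t, ht⟩ = Subring.inclusion hAC x * ⟨s, hs⟩ := Subtype.ext h
  rw [this]
  exact Ideal.mul_mem_right _ _ (Ideal.mem_map_of_mem _ hx)

theorem div_mem_of_isStraightAt_comap {A B : Subring K} [IsLocalRing B] (hAB : A ≤ B)
    {q : Ideal B} (hq : q ≠ ⊤) (hst : IsStraightAt A (q.comap (Subring.inclusion hAB)))
    {x y : A} (hx : x ∈ q.comap (Subring.inclusion hAB))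
    (hy : y ∉ q.comap (Subring.inclusion hAB)) :
    (x : K) / y ∈ B := by
  have hy0 := Subring.coe_ne_zero_of_notMem_ideal hy
  obtain hx0 | hx0 := eq_or_ne (x : K) 0
  · simp [hx0]
  set z := (x : K) / y
  have hqJ : q ≤ Ideal.jacobson ⊥ :=
    (IsLocalRing.jacobson_eq_maximalIdeal (⊥ : Ideal B) bot_ne_top) ▸ IsLocalRing.le_maximalIdeal hq
  have hint : IsIntegral B z := by
    refine isIntegral_of_map_adjoin_inv_eq_top hqJ hq (div_ne_zero hx0 hy0)
      ((Ideal.eq_top_iff_one _).2 ?_)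
    exact hst.mem_map_adjoin hAB hx hy (self_mem_adjoin_singleton B z⁻¹) (one_mem _)
      (by simp only [z]; field_simp)
  obtain ⟨b, hb⟩ := mem_bot_of_isIntegral_of_mem_map_adjoin hqJ hint <|
    hst.mem_map_adjoin hAB hx hy (one_mem _) (self_mem_adjoin_singleton B z)
      (by simp only [z]; field_simp)
  exact hb ▸ b.2

theorem locSet_self_eq_of_div_mem {B : Subring K} {q : Ideal B} [q.IsPrime]
    (h : ∀ ξ ∈ q, ∀ η ∉ q, (ξ : K) / η ∈ B) :
    locSet B q q = Subtype.val '' (q : Set B) := by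
  ext z
  constructor
  · rintro ⟨ξ, hξ, η, hη, rfl⟩
    have hη0 := Subring.coe_ne_zero_of_notMem_ideal hη
    have hmul : η * ⟨_, h ξ hξ η hη⟩ = ξ := Subtype.ext (mul_div_cancel₀ _ hη0)
    exact ⟨_, (‹q.IsPrime›.mem_or_mem (hmul ▸ hξ)).resolve_left hη, rfl⟩
  · rintro ⟨ξ, hξ, rfl⟩
    exact ⟨ξ, hξ, 1, q.one_notMem, by simp⟩

section Localization

variable {A : Subring K} {m : Ideal A} (hm : m.IsPrime)

theorem le_locSubring : A ≤ locSubring A m hm :=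
  fun a ha => ⟨⟨a, ha⟩, 1, hm.one_notMem, by simp⟩

namespace locSubring

theorem isUnit_of_coe_eq_div {b : locSubring A m hm} {x y : A} (hx : x ∉ m) (hy : y ∉ m)
    (hb : (b : K) = x / y) : IsUnit b := by
  refine IsUnit.of_mul_eq_one (b := ⟨y / x, y, x, hx, rfl⟩) (Subtype.ext ?_)
  have := Subring.coe_ne_zero_of_notMem_ideal hx
  have := Subring.coe_ne_zero_of_notMem_ideal hy
  simp only [hb, Subring.coe_mul, Subring.coe_one]
  field_simp

instance : IsLocalRing (locSubring A m hm) := by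
  refine IsLocalRing.of_isUnit_or_isUnit_one_sub_self fun b => ?_
  obtain ⟨x, y, hy, hb⟩ := b.2
  by_cases hx : x ∈ m
  · refine .inr (isUnit_of_coe_eq_div hm (x := y - x) (fun h => hy ?_) hy ?_)
    · simpa using m.add_mem h hx
    · have := Subring.coe_ne_zero_of_notMem_ideal hy
      push_cast [hb]
      field_simp
  · exact .inl (isUnit_of_coe_eq_div hm hx hy hb)

theorem exists_mul_mem_of_mem {ξ η : K} (hξ : ξ ∈ locSubring A m hm)
    (hη : η ∈ locSubring A m hm) : ∃ d : A, d ∉ m ∧ (d : K) * ξ ∈ A ∧ (d : K) * η ∈ A := by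
  obtain ⟨α, s, hs, rfl⟩ := hξ
  obtain ⟨γ, t, ht, rfl⟩ := hη
  have := Subring.coe_ne_zero_of_notMem_ideal hs
  have := Subring.coe_ne_zero_of_notMem_ideal ht
  refine ⟨s * t, fun h => (hm.mem_or_mem h).elim hs ht, ?_, ?_⟩
  · convert (α * t).2 using 1
    push_cast
    field_simp
  · convert (γ * s).2 using 1
    push_cast
    field_simp

theorem div_mem_of_isStraightAt {q : Ideal (locSubring A m hm)} [q.IsPrime]
    (hst : IsStraightAt A (q.comap (Subring.inclusion (le_locSubring hm))))
    {ξ η : locSubring A m hm} (hξ : ξ ∈ q) (hη : η ∉ q) : (ξ : K) / η ∈ locSubring A m hm := by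
  obtain ⟨d, hd, hdξ, hdη⟩ := exists_mul_mem_of_mem hm ξ.2 η.2
  have hd0 := Subring.coe_ne_zero_of_notMem_ideal hd
  have hdq : Subring.inclusion (le_locSubring hm) d ∉ q := fun h =>
    Ideal.IsPrime.ne_top' <| q.eq_top_of_isUnit_mem h <|
      isUnit_of_coe_eq_div hm (y := 1) hd hm.one_notMem (by simp)
  have key := div_mem_of_isStraightAt_comap (le_locSubring hm) Ideal.IsPrime.ne_top' hst
    (x := ⟨_, hdξ⟩) (y := ⟨_, hdη⟩) ?_ ?_
  · simpa [mul_div_mul_left _ _ hd0] using key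
  · show Subring.inclusion (le_locSubring hm) d * ξ ∈ q
    exact q.mul_mem_left _ hξ
  · show Subring.inclusion (le_locSubring hm) d * η ∉ q
    exact fun h => ((‹q.IsPrime›.mem_or_mem h).elim hdq hη)

end locSubring

end Localization

end

theorem stmt8_general {K : Type*} [Field K] (A : Subring K)
    (h : ∀ p : Ideal A, p.IsPrime → IsStraightAt A p) :
    ∀ (m : Ideal A) (hm : m.IsMaximal) (q : Ideal (locSubring A m hm.isPrime)),
      q.IsPrime →
        locSet (locSubring A m hm.isPrime) q q =
          Subtype.val '' (q : Set ↥(locSubring A m hm.isPrime)) := by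
  intro m hm q hq
  exact locSet_self_eq_of_div_mem fun ξ hξ η hη =>
    locSubring.div_mem_of_isStraightAt hm.isPrime (h _ (hq.comap _)) hξ hη

/-- Every straight domain is locally divided: if every prime ideal of the domain `A`
(with fraction field `K`) is straight, then for every maximal ideal `m` of `A` the
localization `A_m` (as a subring of `K`) is a divided domain, i.e. every prime ideal
`q` of `A_m` satisfies `q·(A_m)_q = q`. -/
theorem stmt8 {K : Type*} [Field K] (A : Subring K) [IsFractionRing ↥A K]
    (h : ∀ p : Ideal A, p.IsPrime → IsStraightAt A p) :
    ∀ (m : Ideal A) (hm : m.IsMaximal) (q : Ideal (locSubring A m hm.isPrime)),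
      q.IsPrime →
        locSet (locSubring A m hm.isPrime) q q =
          Subtype.val '' (q : Set ↥(locSubring A m hm.isPrime)) :=
  stmt8_general A h
end
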